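/- Fix M > 0, ρ₀ > 0 and R > 2M + ρ₀, and set I := (2M + ρ₀, R). Let G : ℝ → ℝ be continuous, and let λ be continuous on the closure of I, differentiable on I, with λ(2M + ρ₀) = −(1/2)·log(1 − 2M/(2M + ρ₀)), satisfying for all r ∈ I the equation e^{−2λ(r)}(2rλ'(r) − 1) + 1 = 8πr²G(r). Then for all r ∈ I, e^{−2λ(r)} = 1 − 2m(r)/r, where m(r) := M + 4π∫_{2M+ρ₀}^{r} s²G(s) ds. -/

import Mathlib

/-!
The left-hand side of the field equation is the derivative of `r (1 - e^{-2λ(r)})`, and the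
right-hand side is the derivative of `2 m(r)`. Both functions equal `2M` at `r = 2M + ρ₀`, by the
boundary condition and `m(2M + ρ₀) = M`, so by the mean value theorem they agree on the whole
interval; dividing by `r` gives the claim.
-/

/-- The quasi-local mass `m(r) = M + 4π ∫_{2M+ρ₀}^r s² G(s) ds`. -/
noncomputable def mfun (M ρ₀ : ℝ) (G : ℝ → ℝ) (r : ℝ) : ℝ :=
  M + 4*Real.pi * ∫ s in (2*M+ρ₀)..r, s^2 * G s

open Real Set

theorem eq_of_hasDerivAt_eq_of_continuousOn {f g f' : ℝ → ℝ} {a b : ℝ} (hab : a < b)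
    (hf : ContinuousOn f (Icc a b)) (hg : ContinuousOn g (Icc a b))
    (hff' : ∀ x ∈ Ioo a b, HasDerivAt f (f' x) x) (hgf' : ∀ x ∈ Ioo a b, HasDerivAt g (f' x) x)
    (ha : f a = g a) : f b = g b := by
  obtain ⟨c, -, hc⟩ := exists_hasDerivAt_eq_slope (f - g) (fun _ => 0) hab (hf.sub hg)
    fun x hx => by simpa using (hff' x hx).sub (hgf' x hx)
  have hfg := (div_eq_zero_iff.1 hc.symm).resolve_right (sub_ne_zero.2 hab.ne')
  simpa [ha, sub_eq_zero] using hfg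

theorem hasDerivAt_mul_one_sub_exp_neg_two_mul {lam : ℝ → ℝ} {l r : ℝ}
    (h : HasDerivAt lam l r) :
    HasDerivAt (fun x => x * (1 - exp (-2 * lam x))) (exp (-2 * lam r) * (2 * r * l - 1) + 1) r :=
  ((hasDerivAt_id r).mul ((hasDerivAt_const r 1).sub (h.const_mul (-2)).exp)).congr_deriv
    (by simp only [id, Pi.sub_apply]; ring)

theorem hasDerivAt_mfun (M ρ₀ : ℝ) {G : ℝ → ℝ} (hG : Continuous G) (r : ℝ) :
    HasDerivAt (mfun M ρ₀ G) (4 * π * (r ^ 2 * G r)) r := by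
  have hcG : Continuous fun s : ℝ => s ^ 2 * G s := by fun_prop
  exact ((intervalIntegral.integral_hasDerivAt_right (hcG.intervalIntegrable _ _)
    (hcG.stronglyMeasurableAtFilter _ _) hcG.continuousAt).const_mul (4 * π)).const_add M

theorem continuous_mfun (M ρ₀ : ℝ) {G : ℝ → ℝ} (hG : Continuous G) : Continuous (mfun M ρ₀ G) :=
  continuous_iff_continuousAt.2 fun r => (hasDerivAt_mfun M ρ₀ hG r).continuousAt

@[simp]
theorem mfun_self (M ρ₀ : ℝ) (G : ℝ → ℝ) : mfun M ρ₀ G (2 * M + ρ₀) = M := by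
  simp [mfun]

theorem stmt16_general (M ρ₀ R : ℝ) (hM : 0 < M) (hρ : 0 < ρ₀)
    (G lam : ℝ → ℝ) (hG : Continuous G)
    (hcont : ContinuousOn lam (Set.Icc (2*M+ρ₀) R))
    (hdiff : ∀ r ∈ Set.Ioo (2*M+ρ₀) R, DifferentiableAt ℝ lam r)
    (hbc : lam (2*M+ρ₀) = -(1/2) * Real.log (1 - 2*M/(2*M+ρ₀)))
    (heq : ∀ r ∈ Set.Ioo (2*M+ρ₀) R,
      Real.exp (-2*lam r) * (2*r*deriv lam r - 1) + 1 = 8*Real.pi*r^2*G r) :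
    ∀ r ∈ Set.Ioo (2*M+ρ₀) R,
      Real.exp (-2*lam r) = 1 - 2*(mfun M ρ₀ G r)/r := by
  intro r hr
  have ha : 0 < 2 * M + ρ₀ := by positivity
  have hbase : (2 * M + ρ₀) * (1 - exp (-2 * lam (2 * M + ρ₀))) = 2 * mfun M ρ₀ G (2 * M + ρ₀) := by
    have hpos : 0 < 1 - 2 * M / (2 * M + ρ₀) := by
      rw [sub_pos, div_lt_one ha]; linarith
    rw [hbc, ← mul_assoc, show (-2 : ℝ) * -(1 / 2) = 1 by norm_num, one_mul, exp_log hpos,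
      mfun_self]
    field_simp
    ring
  have hmass : r * (1 - exp (-2 * lam r)) = 2 * mfun M ρ₀ G r := by
    refine eq_of_hasDerivAt_eq_of_continuousOn (f := fun x => x * (1 - exp (-2 * lam x)))
      (f' := fun x => 8 * π * x ^ 2 * G x) hr.1
      ?_ ((continuous_mfun M ρ₀ hG).const_mul 2).continuousOn ?_ ?_ hbase
    · have hlam := hcont.mono (Icc_subset_Icc_right hr.2.le)
      fun_prop
    · intro x hx
      have hxI : x ∈ Ioo (2 * M + ρ₀) R := ⟨hx.1, hx.2.trans hr.2⟩
      rw [← heq x hxI]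
      exact hasDerivAt_mul_one_sub_exp_neg_two_mul (hdiff x hxI).hasDerivAt
    · intro x _
      exact ((hasDerivAt_mfun M ρ₀ hG x).const_mul 2).congr_deriv (by ring)
  have hr0 : 0 < r := ha.trans hr.1
  rw [← hmass, mul_div_cancel_left₀ _ hr0.ne']
  ring

theorem stmt16 (M ρ₀ R : ℝ) (hM : 0 < M) (hρ : 0 < ρ₀) (hR : 2*M + ρ₀ < R)
    (G lam : ℝ → ℝ) (hG : Continuous G)
    (hcont : ContinuousOn lam (Set.Icc (2*M+ρ₀) R))
    (hdiff : ∀ r ∈ Set.Ioo (2*M+ρ₀) R, DifferentiableAt ℝ lam r)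
    (hbc : lam (2*M+ρ₀) = -(1/2) * Real.log (1 - 2*M/(2*M+ρ₀)))
    (heq : ∀ r ∈ Set.Ioo (2*M+ρ₀) R,
      Real.exp (-2*lam r) * (2*r*deriv lam r - 1) + 1 = 8*Real.pi*r^2*G r) :
    ∀ r ∈ Set.Ioo (2*M+ρ₀) R,
      Real.exp (-2*lam r) = 1 - 2*(mfun M ρ₀ G r)/r :=
  stmt16_general M ρ₀ R hM hρ G lam hG hcont hdiff hbc heq
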